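/- arXiv:2006.09361 — 2 statements merged into one kernel-verified Lean document; each statement's English description precedes it below -/
import Mathlib

section
/- Let f : ℝ^{d1} × ℝ^{d2} → ℝ be differentiable with ℓ-Lipschitz gradient, and let μ₂ > 0. Then the partially smoothed function f_{μ₂}(x,y) = E_ω[f(x, y + μ₂ω)], with ω ~ N(0, I_{d2}), is differentiable with ℓ-Lipschitz gradient (jointly in (x,y)), and for every (x,y), ‖∇_y f_{μ₂}(x,y) − ∇_y f(x,y)‖² ≤ (μ₂²/4)ℓ²(d2+3)³. -/
/-!
Since `∇f` is Lipschitz, `f (x, y + μ₂ ω)` grows at most quadratically and its derivative at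
most linearly in `ω`, so the Gaussian's finite second moment lets one differentiate under the
expectation: `∇f_{μ₂}(p) = E[∇f(p + (0, μ₂ ω))]`. Jensen's inequality `‖E X‖² ≤ E ‖X‖²`, applied
block by block, then transfers the Lipschitz bound from `∇f` to `∇f_{μ₂}`, and bounds the bias
`‖∇_y f_{μ₂} - ∇_y f‖²` by `ℓ² E‖μ₂ ω‖² = ℓ² μ₂² d₂ ≤ (μ₂²/4) ℓ² (d₂ + 3)³`.
-/

open MeasureTheory ProbabilityTheory

/-- The standard Gaussian measure `N(0, I_d)` on `ℝ^d`. -/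
noncomputable def stdGaussian (d : ℕ) : Measure (EuclideanSpace ℝ (Fin d)) :=
  (Measure.pi fun _ : Fin d => gaussianReal 0 1).map
    (EuclideanSpace.equiv (Fin d) ℝ).symm

open scoped NNReal

section Jensen

variable {α F : Type*} [MeasurableSpace α] {ν : Measure α} [IsProbabilityMeasure ν]
  [NormedAddCommGroup F] [NormedSpace ℝ F] [CompleteSpace F]

lemma sq_norm_integral_le_integral_sq_norm {u : α → F} (hu : AEStronglyMeasurable u ν)
    (hu2 : Integrable (fun a => ‖u a‖ ^ 2) ν) :
    ‖∫ a, u a ∂ν‖ ^ 2 ≤ ∫ a, ‖u a‖ ^ 2 ∂ν := by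
  have hconv : ConvexOn ℝ Set.univ (fun z : F => ‖z‖ ^ 2) :=
    (convexOn_norm convex_univ).pow (fun _ _ => norm_nonneg _) 2
  exact hconv.map_integral_le (by fun_prop) isClosed_univ (ae_of_all _ fun _ => trivial)
    (((memLp_two_iff_integrable_sq_norm hu).2 hu2).integrable one_le_two) hu2

lemma sq_norm_integral_add_sq_norm_integral_le {F' : Type*} [NormedAddCommGroup F']
    [NormedSpace ℝ F'] [CompleteSpace F'] {u : α → F} {u' : α → F'}
    (hu : AEStronglyMeasurable u ν) (hu' : AEStronglyMeasurable u' ν) {C : ℝ}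
    (hC : ∀ a, ‖u a‖ ^ 2 + ‖u' a‖ ^ 2 ≤ C) :
    ‖∫ a, u a ∂ν‖ ^ 2 + ‖∫ a, u' a ∂ν‖ ^ 2 ≤ C := by
  have bounded {w : α → ℝ} (hw : AEStronglyMeasurable w ν) (hw0 : ∀ a, 0 ≤ w a)
      (hwC : ∀ a, w a ≤ C) : Integrable w ν :=
    (integrable_const C).mono' hw (ae_of_all _ fun a => by
      rw [Real.norm_of_nonneg (hw0 a)]; exact hwC a)
  have hi := bounded (w := fun a => ‖u a‖ ^ 2) (hu.norm.pow 2) (fun _ => by positivity)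
    fun a => by nlinarith [hC a, sq_nonneg ‖u' a‖]
  have hi' := bounded (w := fun a => ‖u' a‖ ^ 2) (hu'.norm.pow 2) (fun _ => by positivity)
    fun a => by nlinarith [hC a, sq_nonneg ‖u a‖]
  calc _ ≤ ∫ a, ‖u a‖ ^ 2 ∂ν + ∫ a, ‖u' a‖ ^ 2 ∂ν :=
        add_le_add (sq_norm_integral_le_integral_sq_norm hu hi)
          (sq_norm_integral_le_integral_sq_norm hu' hi')
    _ = ∫ a, (‖u a‖ ^ 2 + ‖u' a‖ ^ 2) ∂ν := (integral_add hi hi').symm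
    _ ≤ ∫ _a, C ∂ν := integral_mono (hi.add hi') (integrable_const C) hC
    _ = C := by simp

end Jensen

lemma integral_comp_continuousLinearMap {α E E' G : Type*} [MeasurableSpace α] {ν : Measure α}
    [NormedAddCommGroup E] [NormedSpace ℝ E] [NormedAddCommGroup E'] [NormedSpace ℝ E']
    [NormedAddCommGroup G] [NormedSpace ℝ G] [CompleteSpace G] {L : α → E →L[ℝ] G}
    (hL : Integrable L ν) (B : E' →L[ℝ] E) : (∫ a, L a ∂ν) ∘L B = ∫ a, L a ∘L B ∂ν :=
  (((ContinuousLinearMap.compL ℝ E' E G).flip B).integral_comp_comm hL).symm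

section Gaussian

open Module RealInnerProductSpace

lemma stdGaussian_eq_stdGaussian (d : ℕ) :
    stdGaussian d = ProbabilityTheory.stdGaussian (EuclideanSpace ℝ (Fin d)) :=
  map_pi_eq_stdGaussian

instance (d : ℕ) : IsProbabilityMeasure (stdGaussian d) := by
  rw [stdGaussian_eq_stdGaussian]; infer_instance

lemma integral_norm_sq_stdGaussian (E : Type*) [NormedAddCommGroup E] [InnerProductSpace ℝ E]
    [FiniteDimensional ℝ E] [MeasurableSpace E] [BorelSpace E] :
    ∫ x, ‖x‖ ^ 2 ∂(ProbabilityTheory.stdGaussian E) = finrank ℝ E := by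
  set b := stdOrthonormalBasis ℝ E
  have hcoord (i : Fin (finrank ℝ E)) :
      ∫ x, ⟪b i, x⟫ ^ 2 ∂(ProbabilityTheory.stdGaussian E) = 1 := by
    have hvar := variance_dual_stdGaussian (innerSL ℝ (b i))
    rw [variance_of_integral_eq_zero (by fun_prop) (integral_strongDual_stdGaussian _),
      innerSL_apply_norm, b.norm_eq_one, one_pow] at hvar
    simpa using hvar
  have hint (i : Fin (finrank ℝ E)) :
      Integrable (fun x => ⟪b i, x⟫ ^ 2) (ProbabilityTheory.stdGaussian E) :=
    ((innerSL ℝ (b i)).comp_memLp' IsGaussian.memLp_two_id).integrable_sq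
  simp_rw [← b.sum_sq_inner_right]
  rw [integral_finsetSum _ fun i _ => hint i]
  simp [hcoord]

end Gaussian

section DifferentiationUnderIntegral

open Metric

variable {α E G : Type*} [MeasurableSpace α] {ν : Measure α} [IsFiniteMeasure ν]
  [NormedAddCommGroup E] [NormedSpace ℝ E] [NormedAddCommGroup G] [NormedSpace ℝ G]
  {F : E → G} {K : ℝ≥0} {v : α → E}

lemma norm_fderiv_le_of_lipschitzWith (hF' : LipschitzWith K (fderiv ℝ F)) (p q : E) :
    ‖fderiv ℝ F q‖ ≤ ‖fderiv ℝ F p‖ + K * ‖q - p‖ := by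
  linarith [hF'.norm_sub_le q p, norm_le_insert' (fderiv ℝ F q) (fderiv ℝ F p)]

lemma norm_sub_le_of_lipschitzWith_fderiv (hF : Differentiable ℝ F)
    (hF' : LipschitzWith K (fderiv ℝ F)) (p w : E) :
    ‖F (p + w) - F p‖ ≤ (‖fderiv ℝ F p‖ + K * ‖w‖) * ‖w‖ := by
  have hbound : ∀ z ∈ closedBall p ‖w‖, ‖fderiv ℝ F z‖ ≤ ‖fderiv ℝ F p‖ + K * ‖w‖ :=
    fun z hz => (norm_fderiv_le_of_lipschitzWith hF' p z).trans
      (by gcongr; exact mem_closedBall_iff_norm.1 hz)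
  simpa using (convex_closedBall p ‖w‖).norm_image_sub_le_of_norm_fderiv_le (fun z _ => hF z)
    hbound (mem_closedBall_self (norm_nonneg w)) (y := p + w) (by simp)

lemma integrable_comp_add_of_lipschitzWith_fderiv (hF : Differentiable ℝ F)
    (hF' : LipschitzWith K (fderiv ℝ F)) (hv : MemLp v 2 ν) (p : E) :
    Integrable (fun a => F (p + v a)) ν := by
  have hv1 : Integrable (fun a => ‖v a‖) ν := (hv.integrable one_le_two).norm
  have hv2 : Integrable (fun a => ‖v a‖ ^ 2) ν := hv.integrable_norm_pow'
  refine (((integrable_const ‖F p‖).add (hv1.const_mul ‖fderiv ℝ F p‖)).add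
    (hv2.const_mul K)).mono' (hF.continuous.comp_aestronglyMeasurable
      (aestronglyMeasurable_const.add hv.1)) (ae_of_all _ fun a => ?_)
  have hmvt := norm_sub_le_of_lipschitzWith_fderiv hF hF' p (v a)
  have htri := norm_le_insert' (F (p + v a)) (F p)
  simp only [Pi.add_apply]
  nlinarith

lemma integrable_fderiv_comp_add (hF' : LipschitzWith K (fderiv ℝ F)) (hv : Integrable v ν)
    (p : E) : Integrable (fun a => fderiv ℝ F (p + v a)) ν :=
  ((integrable_const ‖fderiv ℝ F p‖).add (hv.norm.const_mul K)).mono'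
    (hF'.continuous.comp_aestronglyMeasurable (aestronglyMeasurable_const.add hv.1))
    (ae_of_all _ fun a => by simpa using norm_fderiv_le_of_lipschitzWith hF' p (p + v a))

lemma hasFDerivAt_integral_comp_add [CompleteSpace G] (hF : Differentiable ℝ F)
    (hF' : LipschitzWith K (fderiv ℝ F)) (hv : MemLp v 2 ν) (p : E) :
    HasFDerivAt (fun q => ∫ a, F (q + v a) ∂ν) (∫ a, fderiv ℝ F (p + v a) ∂ν) p := by
  have hv1 : Integrable v ν := hv.integrable one_le_two
  refine hasFDerivAt_integral_of_dominated_of_fderiv_le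
    (F' := fun q a => fderiv ℝ F (q + v a)) (bound := fun a => ‖fderiv ℝ F p‖ + K * (1 + ‖v a‖))
    (ball_mem_nhds p one_pos)
    (Filter.Eventually.of_forall fun q =>
      hF.continuous.comp_aestronglyMeasurable (aestronglyMeasurable_const.add hv.1))
    (integrable_comp_add_of_lipschitzWith_fderiv hF hF' hv p)
    (integrable_fderiv_comp_add hF' hv1 p).aestronglyMeasurable
    (ae_of_all _ fun a q hq => ?_)
    ((integrable_const _).add (((integrable_const 1).add hv1.norm).const_mul K))
    (ae_of_all _ fun a q _ => (hasFDerivAt_comp_add_right (v a)).2 (hF (q + v a)).hasFDerivAt)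
  refine (norm_fderiv_le_of_lipschitzWith hF' p (q + v a)).trans ?_
  have : ‖q - p‖ < 1 := mem_ball_iff_norm.1 hq
  gcongr
  calc ‖q + v a - p‖ = ‖(q - p) + v a‖ := by rw [add_sub_right_comm]
    _ ≤ 1 + ‖v a‖ := (norm_add_le _ _).trans (by linarith)

end DifferentiationUnderIntegral

section Blocks

open ContinuousLinearMap

variable {E₁ E₂ G : Type*} [NormedAddCommGroup E₁] [NormedSpace ℝ E₁]
  [NormedAddCommGroup E₂] [NormedSpace ℝ E₂] [NormedAddCommGroup G] [NormedSpace ℝ G]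

lemma ContinuousLinearMap.norm_le_norm_comp_inl_add_norm_comp_inr (A : E₁ × E₂ →L[ℝ] G) :
    ‖A‖ ≤ ‖A ∘L inl ℝ E₁ E₂‖ + ‖A ∘L inr ℝ E₁ E₂‖ := by
  refine A.opNorm_le_bound (by positivity) fun u => ?_
  rw [← A.comp_inl_add_comp_inr u, add_mul]
  exact norm_add_le_of_le ((le_opNorm _ _).trans (by gcongr; exact _root_.norm_fst_le u))
    ((le_opNorm _ _).trans (by gcongr; exact _root_.norm_snd_le u))

lemma DifferentiableAt.fderiv_comp_prodMk_left {h : E₁ × E₂ → G} {x : E₁} {y : E₂}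
    (hd : DifferentiableAt ℝ h (x, y)) :
    fderiv ℝ (fun x'' => h (x'', y)) x = fderiv ℝ h (x, y) ∘L inl ℝ E₁ E₂ :=
  (hd.hasFDerivAt.comp x (hasFDerivAt_prodMk_left x y)).fderiv

lemma DifferentiableAt.fderiv_comp_prodMk_right {h : E₁ × E₂ → G} {x : E₁} {y : E₂}
    (hd : DifferentiableAt ℝ h (x, y)) :
    fderiv ℝ (fun y'' => h (x, y'')) y = fderiv ℝ h (x, y) ∘L inr ℝ E₁ E₂ :=
  (hd.hasFDerivAt.comp y (hasFDerivAt_prodMk_right x y)).fderiv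

/-- Lipschitz continuity of `fderiv ℝ g` for the Euclidean norm `√(‖x‖² + ‖y‖²)` on `E₁ × E₂`
and the corresponding norm on its dual (Mathlib's product norm is the sup norm). -/
def BlockLipschitzFDeriv (ℓ : ℝ) (g : E₁ × E₂ → G) : Prop :=
  ∀ p q : E₁ × E₂,
    ‖(fderiv ℝ g p - fderiv ℝ g q) ∘L inl ℝ E₁ E₂‖ ^ 2 +
        ‖(fderiv ℝ g p - fderiv ℝ g q) ∘L inr ℝ E₁ E₂‖ ^ 2 ≤
      ℓ ^ 2 * (‖p.1 - q.1‖ ^ 2 + ‖p.2 - q.2‖ ^ 2)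

lemma BlockLipschitzFDeriv.lipschitzWith {ℓ : ℝ} {g : E₁ × E₂ → G}
    (hg : BlockLipschitzFDeriv ℓ g) : LipschitzWith (2 * ‖ℓ‖₊) (fderiv ℝ g) := by
  refine LipschitzWith.of_dist_le_mul fun p q => ?_
  rw [dist_eq_norm, dist_eq_norm]
  push_cast [coe_nnnorm]
  refine (norm_le_norm_comp_inl_add_norm_comp_inr _).trans ?_
  set a := ‖(fderiv ℝ g p - fderiv ℝ g q) ∘L inl ℝ E₁ E₂‖
  set b := ‖(fderiv ℝ g p - fderiv ℝ g q) ∘L inr ℝ E₁ E₂‖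
  have h1 : ‖p.1 - q.1‖ ^ 2 ≤ ‖p - q‖ ^ 2 := by gcongr; exact _root_.norm_fst_le (p - q)
  have h2 : ‖p.2 - q.2‖ ^ 2 ≤ ‖p - q‖ ^ 2 := by gcongr; exact _root_.norm_snd_le (p - q)
  have hℓ : ℓ ^ 2 = ‖ℓ‖ ^ 2 := by rw [Real.norm_eq_abs, sq_abs]
  have hsq : (a + b) ^ 2 ≤ (2 * ‖ℓ‖ * ‖p - q‖) ^ 2 := by
    nlinarith [hg p q, sq_nonneg (a - b), sq_nonneg ℓ]
  exact (pow_le_pow_iff_left₀ (by positivity) (by positivity) two_ne_zero).1 hsq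

end Blocks

lemma add_prodMk_zero {M N : Type*} [AddZeroClass M] [Add N] (q : M × N) (w : N) :
    q + ((0 : M), w) = (q.1, q.2 + w) :=
  Prod.ext (add_zero _) rfl

section Smoothing

open ContinuousLinearMap

variable {α E₁ E₂ G : Type*} [MeasurableSpace α] {ν : Measure α}
  [NormedAddCommGroup E₁] [NormedSpace ℝ E₁] [NormedAddCommGroup E₂] [NormedSpace ℝ E₂]
  [NormedAddCommGroup G] [NormedSpace ℝ G]
  {v : α → E₂} {g : E₁ × E₂ → G}

variable (ν v g) in
noncomputable def smoothSnd (p : E₁ × E₂) : G :=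
  ∫ a, g (p.1, p.2 + v a) ∂ν

variable {K : ℝ≥0}

lemma integrable_fderiv_comp_snd_add [IsFiniteMeasure ν] (hg' : LipschitzWith K (fderiv ℝ g))
    (hv : Integrable v ν) (p : E₁ × E₂) :
    Integrable (fun a => fderiv ℝ g (p.1, p.2 + v a)) ν := by
  simpa only [inr_apply, add_prodMk_zero] using
    integrable_fderiv_comp_add hg' ((inr ℝ E₁ E₂).integrable_comp hv) p

variable [CompleteSpace G]

lemma hasFDerivAt_smoothSnd [IsFiniteMeasure ν] (hg : Differentiable ℝ g)
    (hg' : LipschitzWith K (fderiv ℝ g)) (hv : MemLp v 2 ν) (p : E₁ × E₂) :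
    HasFDerivAt (smoothSnd ν v g) (∫ a, fderiv ℝ g (p.1, p.2 + v a) ∂ν) p := by
  have h := hasFDerivAt_integral_comp_add hg hg' ((inr ℝ E₁ E₂).comp_memLp' hv) p
  simp only [Function.comp_apply, inr_apply, add_prodMk_zero] at h
  exact h

variable {ℓ : ℝ}

lemma blockLipschitzFDeriv_smoothSnd [IsProbabilityMeasure ν] (hg : Differentiable ℝ g)
    (hL : BlockLipschitzFDeriv ℓ g) (hv : MemLp v 2 ν) :
    BlockLipschitzFDeriv ℓ (smoothSnd ν v g) := by
  intro p q
  have hint := integrable_fderiv_comp_snd_add hL.lipschitzWith (hv.integrable one_le_two)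
  have hD : Integrable (fun a => fderiv ℝ g (p.1, p.2 + v a) - fderiv ℝ g (q.1, q.2 + v a)) ν :=
    (hint p).sub (hint q)
  rw [(hasFDerivAt_smoothSnd hg hL.lipschitzWith hv p).fderiv,
    (hasFDerivAt_smoothSnd hg hL.lipschitzWith hv q).fderiv, ← integral_sub (hint p) (hint q),
    integral_comp_continuousLinearMap hD, integral_comp_continuousLinearMap hD]
  refine sq_norm_integral_add_sq_norm_integral_le ?_ ?_ fun a => ?_
  · exact (((compL ℝ E₁ (E₁ × E₂) G).flip (inl ℝ E₁ E₂)).integrable_comp hD).aestronglyMeasurable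
  · exact (((compL ℝ E₂ (E₁ × E₂) G).flip (inr ℝ E₁ E₂)).integrable_comp hD).aestronglyMeasurable
  · simpa only [add_sub_add_right_eq_sub] using hL (p.1, p.2 + v a) (q.1, q.2 + v a)

lemma sq_norm_fderiv_smoothSnd_sub_comp_inr_le [IsProbabilityMeasure ν]
    (hg : Differentiable ℝ g) (hL : BlockLipschitzFDeriv ℓ g) (hv : MemLp v 2 ν)
    (p : E₁ × E₂) :
    ‖(fderiv ℝ (smoothSnd ν v g) p - fderiv ℝ g p) ∘L inr ℝ E₁ E₂‖ ^ 2 ≤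
      ℓ ^ 2 * ∫ a, ‖v a‖ ^ 2 ∂ν := by
  set D := fun a => fderiv ℝ g (p.1, p.2 + v a) - fderiv ℝ g p
  have hD : Integrable D ν :=
    (integrable_fderiv_comp_snd_add hL.lipschitzWith (hv.integrable one_le_two) p).sub
      (integrable_const _)
  have hDinr := ((compL ℝ E₂ (E₁ × E₂) G).flip (inr ℝ E₁ E₂)).integrable_comp hD
  have hpt (a : α) : ‖D a ∘L inr ℝ E₁ E₂‖ ^ 2 ≤ ℓ ^ 2 * ‖v a‖ ^ 2 := by
    have := hL (p.1, p.2 + v a) p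
    simp only [sub_self, norm_zero, add_sub_cancel_left] at this
    nlinarith [sq_nonneg ‖D a ∘L inl ℝ E₁ E₂‖]
  have hv2 : Integrable (fun a => ‖v a‖ ^ 2) ν := hv.integrable_norm_pow'
  have hD2 : Integrable (fun a => ‖D a ∘L inr ℝ E₁ E₂‖ ^ 2) ν :=
    (hv2.const_mul (ℓ ^ 2)).mono' (hDinr.aestronglyMeasurable.norm.pow 2)
      (ae_of_all _ fun a => by rw [Real.norm_of_nonneg (by positivity)]; exact hpt a)
  have hconst : ∫ _a, fderiv ℝ g p ∂ν = fderiv ℝ g p := by simp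
  calc _ = ‖∫ a, D a ∘L inr ℝ E₁ E₂ ∂ν‖ ^ 2 := by
        rw [(hasFDerivAt_smoothSnd hg hL.lipschitzWith hv p).fderiv, ← hconst,
          ← integral_sub (integrable_fderiv_comp_snd_add hL.lipschitzWith
            (hv.integrable one_le_two) p) (integrable_const _),
          integral_comp_continuousLinearMap hD]
    _ ≤ ∫ a, ‖D a ∘L inr ℝ E₁ E₂‖ ^ 2 ∂ν :=
        sq_norm_integral_le_integral_sq_norm hDinr.aestronglyMeasurable hD2
    _ ≤ ∫ a, ℓ ^ 2 * ‖v a‖ ^ 2 ∂ν := integral_mono hD2 (hv2.const_mul _) hpt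
    _ = ℓ ^ 2 * ∫ a, ‖v a‖ ^ 2 ∂ν := integral_const_mul _ _

end Smoothing

section Gradient

open ContinuousLinearMap InnerProductSpace

variable {E₁ E₂ : Type*} [NormedAddCommGroup E₁] [InnerProductSpace ℝ E₁]
  [NormedAddCommGroup E₂] [InnerProductSpace ℝ E₂]
  {h₁ h₂ : E₁ × E₂ → ℝ} {x x' : E₁} {y y' : E₂}

lemma norm_gradient_sub_gradient {E : Type*} [NormedAddCommGroup E] [InnerProductSpace ℝ E]
    [CompleteSpace E] (φ ψ : E → ℝ) (z z' : E) :
    ‖gradient φ z - gradient ψ z'‖ = ‖fderiv ℝ φ z - fderiv ℝ ψ z'‖ := by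
  rw [gradient, gradient, ← map_sub, LinearIsometryEquiv.norm_map]

lemma norm_gradient_fst_sub_gradient_fst [CompleteSpace E₁] (hd₁ : DifferentiableAt ℝ h₁ (x, y))
    (hd₂ : DifferentiableAt ℝ h₂ (x', y')) :
    ‖gradient (fun x'' => h₁ (x'', y)) x - gradient (fun x'' => h₂ (x'', y')) x'‖ =
      ‖(fderiv ℝ h₁ (x, y) - fderiv ℝ h₂ (x', y')) ∘L inl ℝ E₁ E₂‖ := by
  rw [norm_gradient_sub_gradient, sub_comp, hd₁.fderiv_comp_prodMk_left,
    hd₂.fderiv_comp_prodMk_left]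

lemma norm_gradient_snd_sub_gradient_snd [CompleteSpace E₂] (hd₁ : DifferentiableAt ℝ h₁ (x, y))
    (hd₂ : DifferentiableAt ℝ h₂ (x', y')) :
    ‖gradient (fun y'' => h₁ (x, y'')) y - gradient (fun y'' => h₂ (x', y'')) y'‖ =
      ‖(fderiv ℝ h₁ (x, y) - fderiv ℝ h₂ (x', y')) ∘L inr ℝ E₁ E₂‖ := by
  rw [norm_gradient_sub_gradient, sub_comp, hd₁.fderiv_comp_prodMk_right,
    hd₂.fderiv_comp_prodMk_right]

lemma blockLipschitzFDeriv_iff_gradient [CompleteSpace E₁] [CompleteSpace E₂] {ℓ : ℝ}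
    {h : E₁ × E₂ → ℝ} (hh : Differentiable ℝ h) :
    BlockLipschitzFDeriv ℓ h ↔ ∀ x x' y y',
      ‖gradient (fun x'' => h (x'', y)) x - gradient (fun x'' => h (x'', y')) x'‖ ^ 2 +
          ‖gradient (fun y'' => h (x, y'')) y - gradient (fun y'' => h (x', y'')) y'‖ ^ 2 ≤
        ℓ ^ 2 * (‖x - x'‖ ^ 2 + ‖y - y'‖ ^ 2) := by
  simp only [norm_gradient_fst_sub_gradient_fst (hh _) (hh _),
    norm_gradient_snd_sub_gradient_snd (hh _) (hh _)]
  exact ⟨fun H x x' y y' => H (x, y) (x', y'), fun H p q => H p.1 q.1 p.2 q.2⟩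

end Gradient

theorem zo_vrgda_stmt9_general (d1 d2 : ℕ)
    (f : EuclideanSpace ℝ (Fin d1) → EuclideanSpace ℝ (Fin d2) → ℝ)
    (ℓ μ₂ : ℝ)
    (hdiff : Differentiable ℝ
      (fun p : EuclideanSpace ℝ (Fin d1) × EuclideanSpace ℝ (Fin d2) => f p.1 p.2))
    (hlip : ∀ x x' y y',
      ‖gradient (fun x'' => f x'' y) x - gradient (fun x'' => f x'' y') x'‖ ^ 2 +
          ‖gradient (f x) y - gradient (f x') y'‖ ^ 2 ≤
        ℓ ^ 2 * (‖x - x'‖ ^ 2 + ‖y - y'‖ ^ 2)) :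
    Differentiable ℝ
      (fun p : EuclideanSpace ℝ (Fin d1) × EuclideanSpace ℝ (Fin d2) =>
        ∫ ω, f p.1 (p.2 + μ₂ • ω) ∂(stdGaussian d2)) ∧
    (∀ x x' y y',
      ‖gradient (fun x'' => ∫ ω, f x'' (y + μ₂ • ω) ∂(stdGaussian d2)) x -
            gradient (fun x'' => ∫ ω, f x'' (y' + μ₂ • ω) ∂(stdGaussian d2)) x'‖ ^ 2 +
          ‖gradient (fun y'' => ∫ ω, f x (y'' + μ₂ • ω) ∂(stdGaussian d2)) y -
            gradient (fun y'' => ∫ ω, f x' (y'' + μ₂ • ω) ∂(stdGaussian d2)) y'‖ ^ 2 ≤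
        ℓ ^ 2 * (‖x - x'‖ ^ 2 + ‖y - y'‖ ^ 2)) ∧
    (∀ x y,
      ‖gradient (fun y' => ∫ ω, f x (y' + μ₂ • ω) ∂(stdGaussian d2)) y -
          gradient (f x) y‖ ^ 2 ≤ μ₂ ^ 2 / 4 * ℓ ^ 2 * ((d2 : ℝ) + 3) ^ 3) := by
  set g : EuclideanSpace ℝ (Fin d1) × EuclideanSpace ℝ (Fin d2) → ℝ := fun p => f p.1 p.2
  have hL : BlockLipschitzFDeriv ℓ g := (blockLipschitzFDeriv_iff_gradient hdiff).2 hlip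
  have hv : MemLp (fun ω => μ₂ • ω) 2 (stdGaussian d2) := by
    rw [stdGaussian_eq_stdGaussian]
    exact IsGaussian.memLp_two_id.const_smul μ₂
  set S := smoothSnd (stdGaussian d2) (fun ω => μ₂ • ω) g
  have hS : Differentiable ℝ S :=
    fun p => (hasFDerivAt_smoothSnd hdiff hL.lipschitzWith hv p).differentiableAt
  refine ⟨hS,
    (blockLipschitzFDeriv_iff_gradient hS).1 (blockLipschitzFDeriv_smoothSnd hdiff hL hv),
    fun x y => ?_⟩
  have hmoment : ∫ ω, ‖μ₂ • ω‖ ^ 2 ∂(stdGaussian d2) = μ₂ ^ 2 * d2 := by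
    simp_rw [norm_smul, mul_pow, Real.norm_eq_abs, sq_abs, integral_const_mul,
      stdGaussian_eq_stdGaussian, integral_norm_sq_stdGaussian, finrank_euclideanSpace_fin]
  have hd : 4 * (d2 : ℝ) ≤ ((d2 : ℝ) + 3) ^ 3 := by
    have := Nat.cast_nonneg (α := ℝ) d2
    nlinarith [mul_nonneg this (sq_nonneg (d2 : ℝ))]
  calc _ = ‖(fderiv ℝ S (x, y) - fderiv ℝ g (x, y)) ∘L .inr ℝ _ _‖ ^ 2 :=
        congrArg (· ^ 2) (norm_gradient_snd_sub_gradient_snd (hS (x, y)) (hdiff (x, y)))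
    _ ≤ ℓ ^ 2 * (μ₂ ^ 2 * d2) := hmoment ▸ sq_norm_fderiv_smoothSnd_sub_comp_inr_le hdiff hL hv _
    _ ≤ μ₂ ^ 2 / 4 * ℓ ^ 2 * ((d2 : ℝ) + 3) ^ 3 := by
        nlinarith [mul_nonneg (sq_nonneg μ₂) (sq_nonneg ℓ)]

/-- if `f` is differentiable with `ℓ`-Lipschitz gradient and `μ₂ > 0`, then the
partially smoothed `f_{μ₂}(x,y) = E_ω[f(x, y+μ₂ω)]` is differentiable with `ℓ`-Lipschitz
gradient (jointly in `(x,y)`), and `‖∇_y f_{μ₂}(x,y) − ∇_y f(x,y)‖² ≤ (μ₂²/4)ℓ²(d2+3)³`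
for every `(x,y)`. -/
theorem zo_vrgda_stmt9 (d1 d2 : ℕ)
    (f : EuclideanSpace ℝ (Fin d1) → EuclideanSpace ℝ (Fin d2) → ℝ)
    (ℓ μ₂ : ℝ) (hμ₂ : 0 < μ₂)
    (hdiff : Differentiable ℝ
      (fun p : EuclideanSpace ℝ (Fin d1) × EuclideanSpace ℝ (Fin d2) => f p.1 p.2))
    (hlip : ∀ x x' y y',
      ‖gradient (fun x'' => f x'' y) x - gradient (fun x'' => f x'' y') x'‖ ^ 2 +
          ‖gradient (f x) y - gradient (f x') y'‖ ^ 2 ≤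
        ℓ ^ 2 * (‖x - x'‖ ^ 2 + ‖y - y'‖ ^ 2)) :
    Differentiable ℝ
      (fun p : EuclideanSpace ℝ (Fin d1) × EuclideanSpace ℝ (Fin d2) =>
        ∫ ω, f p.1 (p.2 + μ₂ • ω) ∂(stdGaussian d2)) ∧
    (∀ x x' y y',
      ‖gradient (fun x'' => ∫ ω, f x'' (y + μ₂ • ω) ∂(stdGaussian d2)) x -
            gradient (fun x'' => ∫ ω, f x'' (y' + μ₂ • ω) ∂(stdGaussian d2)) x'‖ ^ 2 +
          ‖gradient (fun y'' => ∫ ω, f x (y'' + μ₂ • ω) ∂(stdGaussian d2)) y -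
            gradient (fun y'' => ∫ ω, f x' (y'' + μ₂ • ω) ∂(stdGaussian d2)) y'‖ ^ 2 ≤
        ℓ ^ 2 * (‖x - x'‖ ^ 2 + ‖y - y'‖ ^ 2)) ∧
    (∀ x y,
      ‖gradient (fun y' => ∫ ω, f x (y' + μ₂ • ω) ∂(stdGaussian d2)) y -
          gradient (f x) y‖ ^ 2 ≤ μ₂ ^ 2 / 4 * ℓ ^ 2 * ((d2 : ℝ) + 3) ^ 3) :=
  zo_vrgda_stmt9_general d1 d2 f ℓ μ₂ hdiff hlip
end

section
/- Let g : ℝ^d → ℝ be μ-strongly convex with ℓ-Lipschitz gradient (0 < μ ≤ ℓ), let τ > 0, and let g_τ(y) = E_ω[g(y + τω)] with ω ~ N(0, I_d) be its Gaussian smoothing. Then for all y, y′ ∈ ℝ^d: g_τ(y) − g_τ(y′) ≤ (1/μ)‖∇g_τ(y)‖² + (τ²/(4μ))ℓ²(d+3)³ + τ²ℓd. -/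
/-!
Averaging the first-order strong-convexity inequality of `g` over the noise shows that the
smoothed function `g_τ` is again `μ`-strongly convex, because `∇g_τ(y) = E[∇g(y + τω)]`:
differentiation under the integral is dominated thanks to the linear growth of `∇g` and the
finite second moment of the Gaussian. Minimising the resulting quadratic lower bound over `y'`
gives `g_τ(y) - g_τ(y') ≤ ‖∇g_τ(y)‖² / (2μ)`, and the remaining terms of the claim are
nonnegative.
-/

open MeasureTheory ProbabilityTheory

open Metric InnerProductSpace
open scoped RealInnerProductSpace NNReal

lemma stdGaussian_eq_stdGaussian_euclideanSpace (d : ℕ) :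
    _root_.stdGaussian d = ProbabilityTheory.stdGaussian (EuclideanSpace ℝ (Fin d)) :=
  map_pi_eq_stdGaussian

instance isGaussian_stdGaussian_fin (d : ℕ) : IsGaussian (_root_.stdGaussian d) := by
  rw [stdGaussian_eq_stdGaussian_euclideanSpace]
  infer_instance

section Integrability

variable {E : Type*} [NormedAddCommGroup E] [NormedSpace ℝ E] [MeasurableSpace E] [BorelSpace E]
  [SecondCountableTopology E] {P : Measure E}

lemma integrable_comp_add_smul_of_norm_le {F : Type*} [NormedAddCommGroup F] [IsFiniteMeasure P]
    (hP : MemLp id 2 P) {f : E → F} (hf : Continuous f) {C : ℝ}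
    (hC : ∀ x, ‖f x‖ ≤ C * (1 + ‖x‖ ^ 2)) (z : E) (τ : ℝ) :
    Integrable (fun ω => f (z + τ • ω)) P := by
  have hsq : Integrable (fun ω : E => ‖ω‖ ^ 2) P := hP.integrable_norm_pow two_ne_zero
  have hC0 : 0 ≤ C := (norm_nonneg _).trans ((hC 0).trans (by simp))
  refine ((integrable_const (C * (1 + 2 * ‖z‖ ^ 2))).add (hsq.const_mul (2 * C * τ ^ 2))).mono'
    (hf.comp (continuous_const.add (continuous_const_smul τ))).aestronglyMeasurable
    (ae_of_all _ fun ω => (hC _).trans ?_)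
  have h1 : ‖z + τ • ω‖ ≤ ‖z‖ + |τ| * ‖ω‖ := by
    simpa [norm_smul] using norm_add_le z (τ • ω)
  have h2 : ‖z + τ • ω‖ ^ 2 ≤ 2 * ‖z‖ ^ 2 + 2 * τ ^ 2 * ‖ω‖ ^ 2 := by
    nlinarith [norm_nonneg (z + τ • ω), sq_abs τ, sq_nonneg (‖z‖ - |τ| * ‖ω‖)]
  simp only [Pi.add_apply]
  nlinarith

end Integrability

variable {E : Type*} [NormedAddCommGroup E] [InnerProductSpace ℝ E] [CompleteSpace E]

lemma norm_fderiv_eq_norm_gradient (f : E → ℝ) (x : E) : ‖fderiv ℝ f x‖ = ‖gradient f x‖ :=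
  ((toDual ℝ E).symm.norm_map _).symm

section Growth

variable {g : E → ℝ} {K : ℝ≥0}

lemma norm_gradient_le_of_lipschitzWith (hK : LipschitzWith K (gradient g)) (x : E) :
    ‖gradient g x‖ ≤ ‖gradient g 0‖ + K * ‖x‖ := by
  have h := hK.dist_le_mul x 0
  rw [dist_eq_norm, dist_eq_norm, sub_zero] at h
  linarith [norm_le_norm_add_norm_sub' (gradient g x) (gradient g 0)]

lemma norm_gradient_le_mul_one_add_sq (hK : LipschitzWith K (gradient g)) (x : E) :
    ‖gradient g x‖ ≤ (‖gradient g 0‖ + K) * (1 + ‖x‖ ^ 2) := by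
  have := norm_gradient_le_of_lipschitzWith hK x
  nlinarith [norm_nonneg x, norm_nonneg (gradient g 0), K.2, sq_nonneg (‖x‖ - 1)]

lemma abs_sub_apply_zero_le (hg : Differentiable ℝ g) (hK : LipschitzWith K (gradient g))
    (x : E) : |g x - g 0| ≤ (‖gradient g 0‖ + K * ‖x‖) * ‖x‖ := by
  have h := (convex_closedBall (0 : E) ‖x‖).norm_image_sub_le_of_norm_fderiv_le
    (C := ‖gradient g 0‖ + K * ‖x‖) (fun z _ => hg z) (fun z hz => ?_)
    (mem_closedBall_self (norm_nonneg x)) (mem_closedBall_zero_iff.2 le_rfl)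
  · simpa using h
  rw [norm_fderiv_eq_norm_gradient]
  have := mem_closedBall_zero_iff.1 hz
  have := norm_gradient_le_of_lipschitzWith hK z
  nlinarith [K.2]

lemma abs_le_mul_one_add_sq (hg : Differentiable ℝ g) (hK : LipschitzWith K (gradient g))
    (x : E) : |g x| ≤ (|g 0| + ‖gradient g 0‖ + K) * (1 + ‖x‖ ^ 2) := by
  have h := abs_sub_apply_zero_le hg hK x
  have := abs_sub_abs_le_abs_sub (g x) (g 0)
  nlinarith [norm_nonneg x, norm_nonneg (gradient g 0), K.2, abs_nonneg (g 0),
    sq_nonneg (‖x‖ - 1)]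

end Growth

noncomputable def smoothing [MeasurableSpace E] (P : Measure E) (τ : ℝ) (g : E → ℝ) (z : E) : ℝ :=
  ∫ ω, g (z + τ • ω) ∂P

def FirstOrderStrongConvex (μ : ℝ) (g : E → ℝ) : Prop :=
  ∀ y y', g y ≥ g y' + ⟪gradient g y', y - y'⟫ + μ / 2 * ‖y - y'‖ ^ 2

lemma FirstOrderStrongConvex.sub_le_norm_gradient_sq {μ : ℝ} {f : E → ℝ}
    (hf : FirstOrderStrongConvex μ f) (hμ : 0 < μ) (y y' : E) :
    f y - f y' ≤ ‖gradient f y‖ ^ 2 / (2 * μ) := by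
  have h := hf y' y
  have hcs := neg_le_of_abs_le (abs_real_inner_le_norm (gradient f y) (y' - y))
  rw [le_div_iff₀ (by positivity)]
  nlinarith [sq_nonneg (‖gradient f y‖ - μ * ‖y' - y‖)]

section Smoothing

variable [MeasurableSpace E] [BorelSpace E] [SecondCountableTopology E] {P : Measure E}
  {g : E → ℝ} {K : ℝ≥0}

lemma hasGradientAt_smoothing [IsFiniteMeasure P] (hP : MemLp id 2 P) (hg : Differentiable ℝ g)
    (hK : LipschitzWith K (gradient g)) (τ : ℝ) (y : E) :
    HasGradientAt (smoothing P τ g) (∫ ω, gradient g (y + τ • ω) ∂P) y := by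
  have hint_grad : Integrable (fun ω => gradient g (y + τ • ω)) P :=
    integrable_comp_add_smul_of_norm_le hP hK.continuous (norm_gradient_le_mul_one_add_sq hK) y τ
  -- `toDual` is only conjugate-linear, hence the semilinear `integral_comp_commSL`.
  have hcomm : toDual ℝ E (∫ ω, gradient g (y + τ • ω) ∂P)
      = ∫ ω, toDual ℝ E (gradient g (y + τ • ω)) ∂P :=
    ((toDual ℝ E).toContinuousLinearEquiv.toContinuousLinearMap.integral_comp_commSL
      (by simp) hint_grad).symm
  rw [hasGradientAt_iff_hasFDerivAt, hcomm]
  refine hasFDerivAt_integral_of_dominated_of_fderiv_le (ball_mem_nhds y one_pos)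
    (F' := fun x ω => toDual ℝ E (gradient g (x + τ • ω)))
    (bound := fun ω => ‖gradient g 0‖ + K * (‖y‖ + 1) + K * |τ| * ‖ω‖)
    (Filter.Eventually.of_forall fun x => ?_) ?_ ?_ (ae_of_all _ fun ω x hx => ?_) ?_
    (ae_of_all _ fun ω x _ => ?_)
  · exact (hg.continuous.comp (continuous_const.add (continuous_const_smul τ))).aestronglyMeasurable
  · exact integrable_comp_add_smul_of_norm_le hP hg.continuous (abs_le_mul_one_add_sq hg hK) y τ
  · exact ((toDual ℝ E).continuous.comp
      (hK.continuous.comp (continuous_const.add (continuous_const_smul τ)))).aestronglyMeasurable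
  · rw [LinearIsometryEquiv.norm_map]
    have hgrad := norm_gradient_le_of_lipschitzWith hK (x + τ • ω)
    have hx' : ‖x + τ • ω‖ ≤ ‖y‖ + 1 + |τ| * ‖ω‖ := by
      have := norm_le_norm_add_norm_sub' x y
      have := mem_ball_iff_norm.1 hx
      have := norm_add_le x (τ • ω)
      rw [norm_smul, Real.norm_eq_abs] at this
      linarith
    nlinarith [K.2]
  · exact (integrable_const _).add ((hP.integrable one_le_two).norm.const_mul (K * |τ|))
  · exact (hg _).hasGradientAt.hasFDerivAt.comp x ((hasFDerivAt_id x).add_const _)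

lemma firstOrderStrongConvex_smoothing [IsProbabilityMeasure P] {μ : ℝ}
    (hsc : FirstOrderStrongConvex μ g) (hP : MemLp id 2 P) (hg : Differentiable ℝ g)
    (hK : LipschitzWith K (gradient g)) (τ : ℝ) :
    FirstOrderStrongConvex μ (smoothing P τ g) := by
  intro y y'
  have hint : ∀ z, Integrable (fun ω => g (z + τ • ω)) P := fun z =>
    integrable_comp_add_smul_of_norm_le hP hg.continuous (abs_le_mul_one_add_sq hg hK) z τ
  have hint_grad : Integrable (fun ω => gradient g (y' + τ • ω)) P :=
    integrable_comp_add_smul_of_norm_le hP hK.continuous (norm_gradient_le_mul_one_add_sq hK) y' τ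
  have hint_inner : Integrable (fun ω => ⟪gradient g (y' + τ • ω), y - y'⟫) P :=
    hint_grad.inner_const _
  have hgrad : ⟪gradient (smoothing P τ g) y', y - y'⟫
      = ∫ ω, ⟪gradient g (y' + τ • ω), y - y'⟫ ∂P := by
    rw [(hasGradientAt_smoothing hP hg hK τ y').gradient, real_inner_comm,
      ← integral_inner hint_grad]
    simp_rw [real_inner_comm]
  calc smoothing P τ g y' + ⟪gradient (smoothing P τ g) y', y - y'⟫ + μ / 2 * ‖y - y'‖ ^ 2
      = ∫ ω, (g (y' + τ • ω) + ⟪gradient g (y' + τ • ω), y - y'⟫ + μ / 2 * ‖y - y'‖ ^ 2) ∂P := by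
        rw [integral_add _ (integrable_const _), integral_add (hint y') hint_inner, integral_const,
          hgrad]
        · simp [smoothing]
        · exact (hint y').add hint_inner
    _ ≤ smoothing P τ g y :=
        integral_mono (((hint y').add hint_inner).add (integrable_const _)) (hint y) fun ω => by
          simpa using hsc (y + τ • ω) (y' + τ • ω)

end Smoothing

theorem zo_vrgda_stmt12_general (d : ℕ) (g : EuclideanSpace ℝ (Fin d) → ℝ)
    (ℓ μ τ : ℝ) (hμ : 0 < μ) (hμℓ : μ ≤ ℓ)
    (hdiff : Differentiable ℝ g)
    (hlip : ∀ y y', ‖gradient g y - gradient g y'‖ ≤ ℓ * ‖y - y'‖)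
    (hsc : ∀ y y',
      g y ≥ g y' + (inner ℝ (gradient g y') (y - y') : ℝ) + μ / 2 * ‖y - y'‖ ^ 2) :
    ∀ y y',
      (∫ ω, g (y + τ • ω) ∂(stdGaussian d)) - (∫ ω, g (y' + τ • ω) ∂(stdGaussian d)) ≤
        1 / μ * ‖gradient (fun z => ∫ ω, g (z + τ • ω) ∂(stdGaussian d)) y‖ ^ 2 +
          τ ^ 2 / (4 * μ) * ℓ ^ 2 * ((d : ℝ) + 3) ^ 3 + τ ^ 2 * ℓ * d := by
  intro y y'
  have hℓ : 0 ≤ ℓ := hμ.le.trans hμℓ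
  have hK : LipschitzWith ⟨ℓ, hℓ⟩ (gradient g) :=
    LipschitzWith.of_dist_le_mul fun a b => by
      rw [dist_eq_norm, dist_eq_norm]; exact hlip a b
  have hsmooth : FirstOrderStrongConvex μ (smoothing (stdGaussian d) τ g) :=
    firstOrderStrongConvex_smoothing hsc IsGaussian.memLp_two_id hdiff hK τ
  have hbound := hsmooth.sub_le_norm_gradient_sq hμ y y'
  have hhalf : ‖gradient (smoothing (stdGaussian d) τ g) y‖ ^ 2 / (2 * μ)
      ≤ 1 / μ * ‖gradient (smoothing (stdGaussian d) τ g) y‖ ^ 2 := by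
    rw [one_div_mul_eq_div]
    exact div_le_div_of_nonneg_left (sq_nonneg _) hμ (by linarith)
  have : 0 ≤ τ ^ 2 / (4 * μ) * ℓ ^ 2 * ((d : ℝ) + 3) ^ 3 := by positivity
  have : 0 ≤ τ ^ 2 * ℓ * d := by positivity
  change smoothing (stdGaussian d) τ g y - smoothing (stdGaussian d) τ g y' ≤
    1 / μ * ‖gradient (smoothing (stdGaussian d) τ g) y‖ ^ 2 + _ + _
  linarith

/-- if `g : ℝ^d → ℝ` is `μ`-strongly convex with `ℓ`-Lipschitz gradient
(`0 < μ ≤ ℓ`) and `τ > 0`, then its Gaussian smoothing `g_τ(y) = E_ω[g(y + τω)]` satisfies,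
for all `y, y'`: `g_τ(y) − g_τ(y') ≤ (1/μ)‖∇g_τ(y)‖² + (τ²/(4μ))ℓ²(d+3)³ + τ²ℓd`. -/
theorem zo_vrgda_stmt12 (d : ℕ) (g : EuclideanSpace ℝ (Fin d) → ℝ)
    (ℓ μ τ : ℝ) (hμ : 0 < μ) (hμℓ : μ ≤ ℓ) (hτ : 0 < τ)
    (hdiff : Differentiable ℝ g)
    (hlip : ∀ y y', ‖gradient g y - gradient g y'‖ ≤ ℓ * ‖y - y'‖)
    (hsc : ∀ y y',
      g y ≥ g y' + (inner ℝ (gradient g y') (y - y') : ℝ) + μ / 2 * ‖y - y'‖ ^ 2) :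
    ∀ y y',
      (∫ ω, g (y + τ • ω) ∂(stdGaussian d)) - (∫ ω, g (y' + τ • ω) ∂(stdGaussian d)) ≤
        1 / μ * ‖gradient (fun z => ∫ ω, g (z + τ • ω) ∂(stdGaussian d)) y‖ ^ 2 +
          τ ^ 2 / (4 * μ) * ℓ ^ 2 * ((d : ℝ) + 3) ^ 3 + τ ^ 2 * ℓ * d :=
  zo_vrgda_stmt12_general d g ℓ μ τ hμ hμℓ hdiff hlip hsc
end
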